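/- Let G = (V,E) be a graph with V a discrete subset of ℝⁿ in which every vertex has finite degree. Then the independence ratio ᾱ(G) = sup over independent sets A of limsup_{R→∞} |A∩V_R|/|V_R| equals limsup_{R→∞} ᾱ(G_R), where V_R = V ∩ [−R,R]ⁿ and G_R is the induced subgraph on V_R with independence ratio α(G_R)/|V_R|. -/

import Mathlib

/-!
The inequality `≤` holds radius by radius: `A ∩ V_R` is independent in `G_R`.

For `≥` with `V` infinite, choose radii `r₀ < r₁ < ⋯` such that `ᾱ(G_{r_{k+1}})` is within
`1/(k+1)` of the limsup and `|V_{r_{k+1}}|` is so large that the neighbourhood `N_k` of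
`V_{r_k}`, finite because degrees are finite, has relative size at most `1/(k+1)` in it. Let `S_k`
be a maximum independent set of `G_{r_{k+1}}`. The sets `S_k \ N_k` are pairwise non-adjacent
(an edge from `S_j ⊆ V_{r_k}`, `j < k`, would land in `N_k`), so their union `A` is independent,
and its density at `r_{k+1}` is at least `ᾱ(G_{r_{k+1}}) - 1/(k+1)`. When `V` is finite both
ratios are eventually constant.
-/

open MeasureTheory Filter Set Pointwise

noncomputable def box (n : ℕ) (R : ℝ) : Set (Fin n → ℝ) := {x | ∀ i, |x i| ≤ R}

noncomputable def density (n : ℕ) (A : Set (Fin n → ℝ)) : ℝ :=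
  Filter.limsup (fun R : ℝ =>
    (volume (A ∩ box n R)).toReal / (volume (box n R)).toReal) Filter.atTop

def AvoidsOne (n : ℕ) (N : (Fin n → ℝ) → ℝ) (A : Set (Fin n → ℝ)) : Prop :=
  ∀ x ∈ A, ∀ y ∈ A, N (x - y) ≠ 1

noncomputable def m1 (n : ℕ) (N : (Fin n → ℝ) → ℝ) : ℝ :=
  sSup {d : ℝ | ∃ A : Set (Fin n → ℝ), MeasurableSet A ∧ AvoidsOne n N A ∧ d = density n A}

noncomputable def polyNorm (n : ℕ) (P : Set (Fin n → ℝ)) (x : Fin n → ℝ) : ℝ :=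
  sInf {l : ℝ | 0 ≤ l ∧ x ∈ l • P}

def IsSymmPolytope (n : ℕ) (P : Set (Fin n → ℝ)) : Prop :=
  Convex ℝ P ∧ (∀ x ∈ P, -x ∈ P) ∧ ∃ F : Finset (Fin n → ℝ), P = convexHull ℝ (↑F : Set (Fin n → ℝ))

def TilesBy (n : ℕ) (P : Set (Fin n → ℝ)) (Λ : Set (Fin n → ℝ)) : Prop :=
  (⋃ l ∈ Λ, (l +ᵥ P)) = Set.univ ∧
  (Λ.Pairwise fun a b => interior (a +ᵥ P) ∩ interior (b +ᵥ P) = ∅)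

section Independence

variable {α : Type*} {Adj : α → α → Prop}

def IsIndependent (Adj : α → α → Prop) (A : Set α) : Prop :=
  ∀ x ∈ A, ∀ y ∈ A, ¬ Adj x y

noncomputable def indepNumIn (Adj : α → α → Prop) (s : Set α) : ℕ :=
  sSup {k | ∃ S ⊆ s, IsIndependent Adj S ∧ S.ncard = k}

def adjSet (Adj : α → α → Prop) (s : Set α) : Set α :=
  {w | ∃ v ∈ s, Adj v w}

lemma IsIndependent.mono {A B : Set α} (hB : IsIndependent Adj B) (hAB : A ⊆ B) :
    IsIndependent Adj A :=
  fun x hx y hy => hB x (hAB hx) y (hAB hy)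

variable {s : Set α}

lemma bddAbove_ncard_isIndependent (hs : s.Finite) :
    BddAbove {k | ∃ S ⊆ s, IsIndependent Adj S ∧ S.ncard = k} :=
  ⟨s.ncard, by rintro _ ⟨S, hS, -, rfl⟩; exact ncard_le_ncard hS hs⟩

lemma exists_isIndependent_ncard_eq_indepNumIn (hs : s.Finite) :
    ∃ S ⊆ s, IsIndependent Adj S ∧ S.ncard = indepNumIn Adj s := by
  refine Nat.sSup_mem ?_ (bddAbove_ncard_isIndependent hs)
  exact ⟨0, ∅, empty_subset s, fun _ h => absurd h (notMem_empty _), ncard_empty α⟩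

lemma IsIndependent.ncard_le_indepNumIn {A : Set α} (hA : IsIndependent Adj A) (hs : s.Finite)
    (hAs : A ⊆ s) : A.ncard ≤ indepNumIn Adj s :=
  le_csSup (bddAbove_ncard_isIndependent hs) ⟨A, hAs, hA, rfl⟩

lemma indepNumIn_le_ncard (hs : s.Finite) : indepNumIn Adj s ≤ s.ncard := by
  obtain ⟨S, hS, -, hcard⟩ := exists_isIndependent_ncard_eq_indepNumIn (Adj := Adj) hs
  exact hcard ▸ ncard_le_ncard hS hs

lemma finite_inter_adjSet {V : Set α} (hdeg : ∀ v ∈ V, {w | w ∈ V ∧ Adj v w}.Finite)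
    (hs : s.Finite) (hsV : s ⊆ V) : (V ∩ adjSet Adj s).Finite :=
  (hs.biUnion fun v hv => hdeg v (hsV hv)).subset
    fun _ ⟨hwV, _, hv, hvw⟩ => mem_biUnion hv ⟨hwV, hvw⟩

lemma isIndependent_iUnion_sdiff_adjSet [Std.Symm Adj] {T S : ℕ → Set α}
    (hT : Monotone T) (hST : ∀ k, S k ⊆ T (k + 1)) (hS : ∀ k, IsIndependent Adj (S k)) :
    IsIndependent Adj (⋃ k, S k \ adjSet Adj (T k)) := by
  have hle : ∀ {j k x y}, j ≤ k → x ∈ S j \ adjSet Adj (T j) →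
      y ∈ S k \ adjSet Adj (T k) → ¬ Adj x y := by
    intro j k x y hjk hx hy hxy
    rcases hjk.eq_or_lt with rfl | hlt
    · exact hS j x hx.1 y hy.1 hxy
    · exact hy.2 ⟨x, hT hlt (hST j hx.1), hxy⟩
  simp only [IsIndependent, mem_iUnion]
  rintro x ⟨j, hx⟩ y ⟨k, hy⟩
  rcases le_total j k with h | h
  · exact hle h hx hy
  · exact fun hxy => hle h hy hx (symm hxy)

end Independence

lemma le_limsup_of_tendsto_of_le_comp {g : ℝ → ℝ} {r a : ℕ → ℝ} {L : ℝ}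
    (hg : IsBoundedUnder (· ≤ ·) atTop g) (hr : Tendsto r atTop atTop)
    (ha : Tendsto a atTop (nhds L)) (hle : ∀ k, a k ≤ g (r k)) : L ≤ limsup g atTop := by
  refine le_of_forall_pos_le_add fun ε hε => ?_
  have hfreq : ∃ᶠ R in atTop, L - ε ≤ g R :=
    hr.frequently ((ha.eventually (lt_mem_nhds (sub_lt_self L hε))).mono
      fun k hk => hk.le.trans (hle k)).frequently
  linarith [le_limsup_of_frequently_le hfreq hg]

lemma exists_seq_tendsto_atTop_of_forall_exists_ge {P : ℕ → ℝ → ℝ → Prop}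
    (h : ∀ k s, ∃ t, s + 1 ≤ t ∧ P k s t) :
    ∃ r : ℕ → ℝ, Monotone r ∧ Tendsto r atTop atTop ∧ ∀ k, P k (r k) (r (k + 1)) := by
  choose next hnext using h
  let r : ℕ → ℝ := fun k => Nat.rec (motive := fun _ => ℝ) 0 next k
  have hr_succ : ∀ k, r k + 1 ≤ r (k + 1) := fun k => (hnext k (r k)).1
  have hr_ge : ∀ k : ℕ, (k : ℝ) ≤ r k := by
    intro k
    induction k with
    | zero => exact Nat.cast_zero.le
    | succ k ih => push_cast; linarith [hr_succ k]
  exact ⟨r, monotone_nat_of_le_succ fun k => by linarith [hr_succ k],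
    tendsto_atTop_mono hr_ge tendsto_natCast_atTop_atTop, fun k => (hnext k (r k)).2⟩

section Exhaustion

variable {α : Type*} {Adj : α → α → Prop} {V : Set α} {K : ℝ → Set α}

noncomputable def densityIn (K : ℝ → Set α) (V A : Set α) (R : ℝ) : ℝ :=
  ((A ∩ K R).ncard : ℝ) / ((V ∩ K R).ncard : ℝ)

noncomputable def indepRatio (Adj : α → α → Prop) (K : ℝ → Set α) (V : Set α)
    (R : ℝ) : ℝ :=
  (indepNumIn Adj (V ∩ K R) : ℝ) / ((V ∩ K R).ncard : ℝ)

lemma Monotone.exists_subset_of_finite_of_subset_iUnion (hK : Monotone K)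
    (hcover : V ⊆ ⋃ R, K R) {T : Set α} (hT : T.Finite) (hTV : T ⊆ V) :
    ∃ R, T ⊆ K R := by
  obtain ⟨R, hR⟩ := hK.directed_le.exists_mem_subset_of_finset_subset_biUnion
    (s := hT.toFinset) (by simpa using hTV.trans hcover)
  exact ⟨R, by simpa using hR⟩

lemma tendsto_ncard_inter_atTop (hK : Monotone K) (hcover : V ⊆ ⋃ R, K R)
    (hfin : ∀ R, (V ∩ K R).Finite) (hV : V.Infinite) :
    Tendsto (fun R => (V ∩ K R).ncard) atTop atTop := by
  refine tendsto_atTop.2 fun m => ?_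
  obtain ⟨T, hTV, hTfin, rfl⟩ := hV.exists_subset_ncard_eq m
  obtain ⟨R₀, hR₀⟩ := hK.exists_subset_of_finite_of_subset_iUnion hcover hTfin hTV
  filter_upwards [eventually_ge_atTop R₀] with R hR
  exact ncard_le_ncard (subset_inter hTV (hR₀.trans (hK hR))) (hfin R)

variable {A : Set α} {R : ℝ}

lemma densityIn_le_one (hAV : A ⊆ V) (hfin : (V ∩ K R).Finite) : densityIn K V A R ≤ 1 :=
  div_le_one_of_le₀ (Nat.cast_le.2 (ncard_le_ncard (inter_subset_inter_left _ hAV) hfin))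
    (Nat.cast_nonneg _)

lemma indepRatio_le_one (hfin : (V ∩ K R).Finite) : indepRatio Adj K V R ≤ 1 :=
  div_le_one_of_le₀ (Nat.cast_le.2 (indepNumIn_le_ncard hfin)) (Nat.cast_nonneg _)

lemma densityIn_le_indepRatio (hfin : (V ∩ K R).Finite) (hAV : A ⊆ V)
    (hA : IsIndependent Adj A) : densityIn K V A R ≤ indepRatio Adj K V R :=
  div_le_div_of_nonneg_right (Nat.cast_le.2 ((hA.mono inter_subset_left).ncard_le_indepNumIn
    hfin (inter_subset_inter_left _ hAV))) (Nat.cast_nonneg _)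

lemma limsup_densityIn_le_limsup_indepRatio (hfin : ∀ R, (V ∩ K R).Finite) (hAV : A ⊆ V)
    (hA : IsIndependent Adj A) :
    limsup (densityIn K V A) atTop ≤ limsup (indepRatio Adj K V) atTop :=
  limsup_le_limsup (Eventually.of_forall fun R => densityIn_le_indepRatio (hfin R) hAV hA)
    (isCoboundedUnder_le_of_le atTop fun R => by unfold densityIn; positivity)
    (isBoundedUnder_of ⟨1, fun R => indepRatio_le_one (hfin R)⟩)

lemma indepRatio_le_densityIn_add {T S : Set α} (hfin : (V ∩ K R).Finite) (hAV : A ⊆ V)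
    (hTfin : (V ∩ adjSet Adj T).Finite) (hS : S ⊆ V ∩ K R)
    (hScard : S.ncard = indepNumIn Adj (V ∩ K R)) (hSA : S \ adjSet Adj T ⊆ A) :
    indepRatio Adj K V R ≤
      densityIn K V A R + ((V ∩ adjSet Adj T).ncard : ℝ) / ((V ∩ K R).ncard : ℝ) := by
  have hcount : indepNumIn Adj (V ∩ K R) ≤ (A ∩ K R).ncard + (V ∩ adjSet Adj T).ncard :=
    calc indepNumIn Adj (V ∩ K R)
        = (S \ adjSet Adj T).ncard + (S ∩ adjSet Adj T).ncard := by
          rw [← hScard, add_comm, ncard_inter_add_ncard_sdiff_eq_ncard _ _ (hfin.subset hS)]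
      _ ≤ (A ∩ K R).ncard + (V ∩ adjSet Adj T).ncard :=
          add_le_add
            (ncard_le_ncard (subset_inter hSA (sdiff_subset.trans (hS.trans inter_subset_right)))
              (hfin.subset (inter_subset_inter_left _ hAV)))
            (ncard_le_ncard (inter_subset_inter_left _ (hS.trans inter_subset_left)) hTfin)
  rw [densityIn, ← add_div]
  exact div_le_div_of_nonneg_right (by exact_mod_cast hcount) (Nat.cast_nonneg _)

lemma exists_isIndependent_le_limsup_densityIn_of_finite (hK : Monotone K)
    (hcover : V ⊆ ⋃ R, K R) (hV : V.Finite) :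
    ∃ A ⊆ V, IsIndependent Adj A ∧
      limsup (indepRatio Adj K V) atTop ≤ limsup (densityIn K V A) atTop := by
  obtain ⟨R₀, hR₀⟩ := hK.exists_subset_of_finite_of_subset_iUnion hcover hV subset_rfl
  have hVR : ∀ᶠ R in atTop, V ∩ K R = V := by
    filter_upwards [eventually_ge_atTop R₀] with R hR
    exact inter_eq_left.2 (hR₀.trans (hK hR))
  obtain ⟨S, hSV, hS, hScard⟩ := exists_isIndependent_ncard_eq_indepNumIn (Adj := Adj) hV
  refine ⟨S, hSV, hS, le_of_eq (limsup_congr ?_)⟩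
  filter_upwards [hVR] with R hR
  have hSR : S ∩ K R = S := inter_eq_left.2 (hSV.trans (hR.symm.subset.trans inter_subset_right))
  rw [indepRatio, densityIn, hR, hSR, hScard]

lemma frequently_lt_indepRatio_and_div_lt (hK : Monotone K) (hcover : V ⊆ ⋃ R, K R)
    (hfin : ∀ R, (V ∩ K R).Finite) (hV : V.Infinite) {ε : ℝ} (hε : 0 < ε) (b : ℝ) :
    ∃ᶠ R in atTop, limsup (indepRatio Adj K V) atTop - ε < indepRatio Adj K V R ∧
      b / ((V ∩ K R).ncard : ℝ) < ε :=
  (frequently_lt_of_lt_limsup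
      (isCoboundedUnder_le_of_le atTop fun R => by unfold indepRatio; positivity)
      (sub_lt_self _ hε)).and_eventually
    ((tendsto_const_nhds.div_atTop (tendsto_natCast_atTop_atTop.comp
      (tendsto_ncard_inter_atTop hK hcover hfin hV))).eventually (gt_mem_nhds hε))

lemma exists_isIndependent_le_limsup_densityIn_of_infinite [Std.Symm Adj]
    (hK : Monotone K) (hcover : V ⊆ ⋃ R, K R) (hfin : ∀ R, (V ∩ K R).Finite)
    (hdeg : ∀ v ∈ V, {w | w ∈ V ∧ Adj v w}.Finite) (hV : V.Infinite) :
    ∃ A ⊆ V, IsIndependent Adj A ∧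
      limsup (indepRatio Adj K V) atTop ≤ limsup (densityIn K V A) atTop := by
  set L := limsup (indepRatio Adj K V) atTop
  have step : ∀ (k : ℕ) (s : ℝ), ∃ R, s + 1 ≤ R ∧
      L - 1 / ((k : ℝ) + 1) < indepRatio Adj K V R ∧
      ((V ∩ adjSet Adj (V ∩ K s)).ncard : ℝ) / ((V ∩ K R).ncard : ℝ) <
        1 / ((k : ℝ) + 1) := by
    intro k s
    obtain ⟨R, hgood, hR⟩ := ((frequently_lt_indepRatio_and_div_lt hK hcover hfin hV
      Nat.one_div_pos_of_nat _).and_eventually (eventually_ge_atTop (s + 1))).exists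
    exact ⟨R, hR, hgood⟩
  obtain ⟨r, hr_mono, hr_tendsto, hr⟩ := exists_seq_tendsto_atTop_of_forall_exists_ge step
  choose S hSsub hSind hScard using
    fun R => exists_isIndependent_ncard_eq_indepNumIn (Adj := Adj) (hfin R)
  set A := ⋃ k, S (r (k + 1)) \ adjSet Adj (V ∩ K (r k))
  have hAV : A ⊆ V := iUnion_subset fun _ _ hx => (hSsub _ hx.1).1
  have hA : IsIndependent Adj A :=
    isIndependent_iUnion_sdiff_adjSet
      (fun _ _ h => inter_subset_inter_right V (hK (hr_mono h)))
      (fun _ => hSsub _) (fun _ => hSind _)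
  refine ⟨A, hAV, hA, le_limsup_of_tendsto_of_le_comp
    (isBoundedUnder_of ⟨1, fun R => densityIn_le_one hAV (hfin R)⟩)
    (hr_tendsto.comp (tendsto_add_atTop_nat 1))
    (a := fun k : ℕ => L - 1 / ((k : ℝ) + 1) - 1 / ((k : ℝ) + 1)) ?_ fun k => ?_⟩
  · simpa using (tendsto_const_nhds.sub tendsto_one_div_add_atTop_nhds_zero_nat).sub
      (tendsto_one_div_add_atTop_nhds_zero_nat (𝕜 := ℝ))
  · obtain ⟨hratio, hsmall⟩ := hr k
    have hest := indepRatio_le_densityIn_add (hfin _) hAV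
      (finite_inter_adjSet hdeg (hfin (r k)) inter_subset_left) (hSsub _) (hScard _)
      (subset_iUnion_of_subset k subset_rfl)
    simp only [Function.comp_apply]
    linarith

theorem sSup_limsup_densityIn_eq_limsup_indepRatio [Std.Symm Adj] (hK : Monotone K)
    (hcover : V ⊆ ⋃ R, K R) (hfin : ∀ R, (V ∩ K R).Finite)
    (hdeg : ∀ v ∈ V, {w | w ∈ V ∧ Adj v w}.Finite) :
    sSup {d | ∃ A ⊆ V, IsIndependent Adj A ∧ d = limsup (densityIn K V A) atTop} =
      limsup (indepRatio Adj K V) atTop := by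
  have hle : ∀ d ∈ {d | ∃ A ⊆ V, IsIndependent Adj A ∧
      d = limsup (densityIn K V A) atTop}, d ≤ limsup (indepRatio Adj K V) atTop := by
    rintro _ ⟨A, hAV, hA, rfl⟩
    exact limsup_densityIn_le_limsup_indepRatio hfin hAV hA
  obtain ⟨A, hAV, hA, hge⟩ := V.finite_or_infinite.elim
    (exists_isIndependent_le_limsup_densityIn_of_finite hK hcover)
    (exists_isIndependent_le_limsup_densityIn_of_infinite hK hcover hfin hdeg)
  exact le_antisymm (csSup_le ⟨_, A, hAV, hA, rfl⟩ hle)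
    (hge.trans (le_csSup ⟨_, hle⟩ ⟨A, hAV, hA, rfl⟩))

end Exhaustion

lemma box_mono {n : ℕ} : Monotone (box n) :=
  fun _ _ h _ hx i => (hx i).trans h

lemma mem_box_norm {n : ℕ} (x : Fin n → ℝ) : x ∈ box n ‖x‖ :=
  fun i => norm_le_pi_norm x i

theorem independence_ratio_eq_limsup_finite_ratios
    (n : ℕ) (V : Set (Fin n → ℝ)) (Adj : (Fin n → ℝ) → (Fin n → ℝ) → Prop)
    (hsym : Symmetric Adj)
    (hdisc : ∀ R : ℝ, (V ∩ box n R).Finite)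
    (hdeg : ∀ v ∈ V, {w | w ∈ V ∧ Adj v w}.Finite) :
    sSup {d : ℝ | ∃ A ⊆ V, (∀ x ∈ A, ∀ y ∈ A, ¬ Adj x y) ∧
        d = Filter.limsup (fun R : ℝ =>
          ((A ∩ box n R).ncard : ℝ) / ((V ∩ box n R).ncard : ℝ)) Filter.atTop}
      = Filter.limsup (fun R : ℝ =>
          ((sSup {k : ℕ | ∃ S ⊆ V ∩ box n R,
              (∀ x ∈ S, ∀ y ∈ S, ¬ Adj x y) ∧ S.ncard = k} : ℕ) : ℝ)
            / ((V ∩ box n R).ncard : ℝ)) Filter.atTop :=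
  have : Std.Symm Adj := ⟨fun _ _ h => hsym h⟩
  sSup_limsup_densityIn_eq_limsup_indepRatio box_mono
    (fun x _ => mem_iUnion.2 ⟨‖x‖, mem_box_norm x⟩) hdisc hdeg
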